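/- arXiv:1008.4614 — 5 statements merged into one kernel-verified Lean document; each statement's English description precedes it below -/
import Mathlib

section
/- Suppose in addition that f(x) > 0 and g(x) > 0 for all x > 0, and that the limits f₀, g₀, f_∞, g_∞ all exist and are finite real numbers. Then there exists λ₀ > 0 such that for all 0 < λ < λ₀ the system (⋆) has no nontrivial convex solution. -/
open Set Filter

/-- A nontrivial convex (radial) solution of the system (⋆):
`((u₁')^N)' = λ N r^{N-1} f(-u₂)`, `((u₂')^N)' = λ N r^{N-1} g(-u₁)` on `(0,1)`,
with `u₁'(0) = u₂'(0) = 0`, `u₁(1) = u₂(1) = 0`, `(u₁,u₂)` not identically zero,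
each `uᵢ` convex and continuously differentiable on `[0,1]`. -/
def IsNontrivialConvexSolution (N : ℕ) (f g : ℝ → ℝ) (lam : ℝ) (u₁ u₂ : ℝ → ℝ) : Prop :=
  ConvexOn ℝ (Icc (0:ℝ) 1) u₁ ∧ ConvexOn ℝ (Icc (0:ℝ) 1) u₂ ∧
  ∃ d₁ d₂ : ℝ → ℝ,
    ContinuousOn d₁ (Icc 0 1) ∧ ContinuousOn d₂ (Icc 0 1) ∧
    (∀ r ∈ Icc (0:ℝ) 1, HasDerivWithinAt u₁ (d₁ r) (Icc 0 1) r) ∧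
    (∀ r ∈ Icc (0:ℝ) 1, HasDerivWithinAt u₂ (d₂ r) (Icc 0 1) r) ∧
    (∀ r ∈ Ioo (0:ℝ) 1,
      HasDerivWithinAt (fun s => (d₁ s) ^ N) (lam * N * r ^ (N - 1) * f (-u₂ r)) (Ioo 0 1) r) ∧
    (∀ r ∈ Ioo (0:ℝ) 1,
      HasDerivWithinAt (fun s => (d₂ s) ^ N) (lam * N * r ^ (N - 1) * g (-u₁ r)) (Ioo 0 1) r) ∧
    d₁ 0 = 0 ∧ d₂ 0 = 0 ∧ u₁ 1 = 0 ∧ u₂ 1 = 0 ∧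
    ¬ (∀ t ∈ Icc (0:ℝ) 1, u₁ t = 0 ∧ u₂ t = 0)


lemma growth_bound (N : ℕ) (hN : 1 ≤ N) (f : ℝ → ℝ)
    (hfc : ContinuousOn f (Ici 0)) (f₀ fI : ℝ)
    (hf0 : Tendsto (fun x => f x / x ^ N) (nhdsWithin 0 (Ioi 0)) (nhds f₀))
    (hfi : Tendsto (fun x => f x / x ^ N) atTop (nhds fI)) :
    ∃ C : ℝ, 0 < C ∧ ∀ x : ℝ, 0 ≤ x → f x ≤ C * x ^ N := by
  -- f 0 = 0
  have hf00 : f 0 = 0 := by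
    have h1 : Tendsto f (nhdsWithin 0 (Ioi 0)) (nhds (f 0)) :=
      ((hfc 0 (mem_Ici.mpr le_rfl)).mono Ioi_subset_Ici_self).tendsto
    have h2 : Tendsto (fun x : ℝ => (f x / x ^ N) * x ^ N) (nhdsWithin 0 (Ioi 0)) (nhds (f₀ * 0)) := by
      apply hf0.mul
      have : Tendsto (fun x : ℝ => x ^ N) (nhds (0:ℝ)) (nhds ((0:ℝ) ^ N)) :=
        (continuous_pow N).tendsto 0
      simpa [zero_pow (by omega : N ≠ 0)] using this.mono_left nhdsWithin_le_nhds
    have heq : Tendsto f (nhdsWithin 0 (Ioi 0)) (nhds (f₀ * 0)) := by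
      apply h2.congr'
      filter_upwards [self_mem_nhdsWithin] with x (hx : 0 < x)
      field_simp
    exact tendsto_nhds_unique h1 heq |>.trans (by ring)
  -- bound at infinity
  obtain ⟨M, hM⟩ := (hfi.eventually (eventually_le_nhds (lt_add_one fI))).exists_forall_of_atTop
  -- bound near zero
  have h0ev : ∀ᶠ x in nhdsWithin (0:ℝ) (Ioi 0), f x / x ^ N ≤ f₀ + 1 :=
    hf0.eventually (eventually_le_nhds (lt_add_one f₀))
  obtain ⟨ε, hε, hball⟩ := Metric.mem_nhdsWithin_iff.mp h0ev
  set M' := max M 1 with hM'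
  set δ := min (ε / 2) 1 with hδ
  have hδpos : 0 < δ := lt_min (half_pos hε) one_pos
  have hδle : δ ≤ 1 := min_le_right _ _
  -- middle bound
  obtain ⟨B, hB⟩ := (isCompact_Icc (a := δ) (b := M')).exists_bound_of_continuousOn
    (hfc.mono (fun x hx => le_trans hδpos.le hx.1))
  set C := max (max (f₀ + 1) (fI + 1)) (max (B / δ ^ N) 0) + 1 with hC
  have hCpos : 0 < C := by positivity
  refine ⟨C, hCpos, fun x hx => ?_⟩
  rcases eq_or_lt_of_le hx with h | hxpos
  · simp [← h, hf00, zero_pow (by omega : N ≠ 0)]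
  have hxN : (0:ℝ) < x ^ N := pow_pos hxpos N
  have key : f x / x ^ N ≤ C → f x ≤ C * x ^ N := fun h => by
    rw [div_le_iff₀ hxN] at h; linarith
  apply key
  rcases le_or_gt x δ with h1 | h1
  · have : x ∈ Metric.ball (0:ℝ) ε ∩ Ioi 0 := by
      constructor
      · simp only [Metric.mem_ball, Real.dist_eq, sub_zero, abs_of_pos hxpos]
        calc x ≤ δ := h1
          _ ≤ ε / 2 := min_le_left _ _
          _ < ε := by linarith
      · exact hxpos
    have := hball this
    calc f x / x ^ N ≤ f₀ + 1 := this
      _ ≤ C := by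
        have := le_max_left (f₀+1) (fI+1)
        have := le_max_left (max (f₀ + 1) (fI + 1)) (max (B / δ ^ N) 0)
        simp only [hC]; nlinarith [le_max_left (f₀+1) (fI+1)]
  rcases le_or_gt x M' with h2 | h2
  · have hxmem : x ∈ Icc δ M' := ⟨h1.le, h2⟩
    have hfb := hB x hxmem
    have hδN : (0:ℝ) < δ ^ N := pow_pos hδpos N
    have : f x ≤ B := le_trans (le_abs_self _) hfb
    have hx2 : δ ^ N ≤ x ^ N := pow_le_pow_left₀ hδpos.le h1.le N
    calc f x / x ^ N ≤ B / δ ^ N := by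
          rw [div_le_div_iff₀ hxN hδN]
          nlinarith [this, hx2, hδN.le, (norm_nonneg (f x)).trans hfb]
      _ ≤ C := by
        have := le_max_left (B / δ ^ N) 0
        have := le_max_right (max (f₀ + 1) (fI + 1)) (max (B / δ ^ N) 0)
        simp only [hC]; linarith
  · have : f x / x ^ N ≤ fI + 1 := hM x (le_trans (le_max_left M 1) h2.le)
    calc f x / x ^ N ≤ fI + 1 := this
      _ ≤ C := by
        have h3 := le_max_right (f₀+1) (fI+1)
        have h4 := le_max_left (max (f₀ + 1) (fI + 1)) (max (B / δ ^ N) 0)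
        simp only [hC]; linarith


/-- derivative of a convex function is monotone, hence nonneg if zero at left end;
then the function is monotone and bounded by its right endpoint value. -/
lemma conv_mono (u d : ℝ → ℝ) (hcv : ConvexOn ℝ (Icc (0:ℝ) 1) u)
    (hu : ∀ r ∈ Icc (0:ℝ) 1, HasDerivWithinAt u (d r) (Icc 0 1) r) (hd0 : d 0 = 0) :
    MonotoneOn u (Icc 0 1) ∧ ∀ r ∈ Icc (0:ℝ) 1, 0 ≤ d r := by
  have h0m : (0:ℝ) ∈ Icc (0:ℝ) 1 := ⟨le_rfl, zero_le_one⟩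
  have hdm : MonotoneOn d (Icc 0 1) := by
    intro x hx y hy hxy
    rcases eq_or_lt_of_le hxy with rfl | h
    · exact le_rfl
    have h1 := hcv.le_slope_of_hasDerivWithinAt hx hy h (hu x hx)
    have h2 := hcv.slope_le_of_hasDerivWithinAt hx hy h (hu y hy)
    exact h1.trans h2
  have hdnn : ∀ r ∈ Icc (0:ℝ) 1, 0 ≤ d r := by
    intro r hr
    have := hdm h0m hr hr.1
    rwa [hd0] at this
  refine ⟨?_, hdnn⟩
  apply monotoneOn_of_hasDerivWithinAt_nonneg (convex_Icc 0 1)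
    (fun r hr => (hu r hr).continuousWithinAt)
    (f' := d)
  · intro x hx
    rw [interior_Icc] at hx
    exact (hu x (Ioo_subset_Icc_self hx)).mono interior_subset
  · intro x hx
    rw [interior_Icc] at hx
    exact hdnn x (Ioo_subset_Icc_self hx)

/-- the key contraction estimate -/
lemma key_est (N : ℕ) (hN : 1 ≤ N) (C lam : ℝ) (hC : 0 < C) (hlam : 0 < lam)
    (f : ℝ → ℝ) (hfB : ∀ x, 0 ≤ x → f x ≤ C * x ^ N) (hfnn : ∀ x, 0 ≤ x → 0 ≤ f x)
    (u v d : ℝ → ℝ)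
    (hdc : ContinuousOn d (Icc 0 1))
    (hu : ∀ r ∈ Icc (0:ℝ) 1, HasDerivWithinAt u (d r) (Icc 0 1) r)
    (hD : ∀ r ∈ Ioo (0:ℝ) 1,
      HasDerivWithinAt (fun s => (d s) ^ N) (lam * N * r ^ (N - 1) * f (-v r)) (Ioo 0 1) r)
    (hd0 : d 0 = 0) (hu1 : u 1 = 0)
    (hvmem : ∀ r ∈ Icc (0:ℝ) 1, 0 ≤ -v r ∧ -v r ≤ -v 0) :
    -u 0 ≤ (lam * N * C) ^ ((1:ℝ)/N) * (-v 0) := by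
  have h0m : (0:ℝ) ∈ Icc (0:ℝ) 1 := ⟨le_rfl, zero_le_one⟩
  have h1m : (1:ℝ) ∈ Icc (0:ℝ) 1 := ⟨zero_le_one, le_rfl⟩
  have hNne : (N:ℝ) ≠ 0 := by positivity
  have hv0 : 0 ≤ -v 0 := (hvmem 0 h0m).1
  set A : ℝ := lam * N * C * (-v 0) ^ N with hA
  have hAnn : 0 ≤ A := by positivity
  -- G monotone
  have hG : MonotoneOn (fun t => A * t - d t ^ N) (Icc (0:ℝ) 1) := by
    apply monotoneOn_of_hasDerivWithinAt_nonneg (convex_Icc 0 1)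
      ((continuousOn_const.mul continuousOn_id).sub (hdc.pow N))
      (f' := fun x => A - lam * N * x ^ (N - 1) * f (-v x))
    · intro x hx
      rw [interior_Icc] at hx ⊢
      have h1 : HasDerivWithinAt (fun t : ℝ => A * t) A (Ioo 0 1) x := by
        simpa using (hasDerivWithinAt_id x (Ioo (0:ℝ) 1)).const_mul A
      exact h1.sub (hD x hx)
    · intro x hx
      rw [interior_Icc] at hx
      have hxm := Ioo_subset_Icc_self hx
      have hv := hvmem x hxm
      have hf1 : f (-v x) ≤ C * (-v 0) ^ N :=
        (hfB _ hv.1).trans (by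
          have := pow_le_pow_left₀ hv.1 hv.2 N
          nlinarith)
      have hf2 : 0 ≤ f (-v x) := hfnn _ hv.1
      have hx1 : x ^ (N - 1) ≤ 1 := pow_le_one₀ hx.1.le hxm.2
      have hx0 : 0 ≤ x ^ (N - 1) := pow_nonneg hx.1.le _
      have h5 : x ^ (N - 1) * f (-v x) ≤ C * (-v 0) ^ N := by nlinarith
      have h6 := mul_le_mul_of_nonneg_left h5 (by positivity : (0:ℝ) ≤ lam * N)
      simp only [hA]
      nlinarith
  -- hence d r ^ N ≤ A on Icc
  have hdA : ∀ r ∈ Icc (0:ℝ) 1, d r ^ N ≤ A := by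
    intro r hr
    have := hG h0m hr hr.1
    simp only [hd0, zero_pow (by omega : N ≠ 0), mul_zero, sub_zero, mul_one] at this
    nlinarith [hr.2, hAnn]
  -- the N-th root bound
  set K : ℝ := (lam * N * C) ^ ((1:ℝ)/N) with hK
  have hKnn : 0 ≤ K := Real.rpow_nonneg (by positivity) _
  set b : ℝ := K * (-v 0) with hb
  have hbnn : 0 ≤ b := mul_nonneg hKnn hv0
  have hbN : b ^ N = A := by
    rw [hb, mul_pow, hK, ← Real.rpow_natCast ((lam * ↑N * C) ^ ((1:ℝ)/↑N)) N,
      ← Real.rpow_mul (by positivity), one_div, inv_mul_cancel₀ hNne, Real.rpow_one]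
  have hdb : ∀ r ∈ Icc (0:ℝ) 1, d r ≤ b := by
    intro r hr
    by_contra hlt
    push_neg at hlt
    have := pow_lt_pow_left₀ hlt hbnn (by omega : N ≠ 0)
    have h2 := hdA r hr
    rw [hbN] at this
    linarith
  -- integrate: u 1 - u 0 ≤ b
  have hH : MonotoneOn (fun t => b * t - u t) (Icc (0:ℝ) 1) := by
    apply monotoneOn_of_hasDerivWithinAt_nonneg (convex_Icc 0 1)
      ((continuousOn_const.mul continuousOn_id).sub
        (fun r hr => (hu r hr).continuousWithinAt))
      (f' := fun x => b - d x)
    · intro x hx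
      have hxm : x ∈ Icc (0:ℝ) 1 := interior_subset hx
      have h1 : HasDerivWithinAt (fun t : ℝ => b * t) b (interior (Icc (0:ℝ) 1)) x := by
        simpa using (hasDerivWithinAt_id x _).const_mul b
      exact h1.sub ((hu x hxm).mono interior_subset)
    · intro x hx
      have hxm : x ∈ Icc (0:ℝ) 1 := interior_subset hx
      have := hdb x hxm
      linarith
  have := hH h0m h1m zero_le_one
  simp only [mul_zero, mul_one, hu1, sub_zero] at this
  linarith

/-- Theorem 2(e): if `f, g > 0` on `(0,∞)` and the limits `f₀, g₀, f_∞, g_∞` all exist and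
are finite real numbers, then there is `λ₀ > 0` such that for all `0 < λ < λ₀` the system
(⋆) has no nontrivial convex solution. -/
theorem nonexistence_small_lambda
    (N : ℕ) (hN : 1 ≤ N) (f g : ℝ → ℝ)
    (hfc : ContinuousOn f (Ici 0)) (hgc : ContinuousOn g (Ici 0))
    (hfnn : ∀ x, 0 ≤ x → 0 ≤ f x) (hgnn : ∀ x, 0 ≤ x → 0 ≤ g x)
    (hfpos : ∀ x : ℝ, 0 < x → 0 < f x) (hgpos : ∀ x : ℝ, 0 < x → 0 < g x)
    (f₀ g₀ fI gI : ℝ)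
    (hf0 : Tendsto (fun x => f x / x ^ N) (nhdsWithin 0 (Ioi 0)) (nhds f₀))
    (hg0 : Tendsto (fun x => g x / x ^ N) (nhdsWithin 0 (Ioi 0)) (nhds g₀))
    (hfi : Tendsto (fun x => f x / x ^ N) atTop (nhds fI))
    (hgi : Tendsto (fun x => g x / x ^ N) atTop (nhds gI)) :
    ∃ lam₀ : ℝ, 0 < lam₀ ∧ ∀ lam : ℝ, 0 < lam → lam < lam₀ →
      ¬ ∃ u₁ u₂ : ℝ → ℝ, IsNontrivialConvexSolution N f g lam u₁ u₂ := by
  obtain ⟨Cf, hCf, hfB⟩ := growth_bound N hN f hfc f₀ fI hf0 hfi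
  obtain ⟨Cg, hCg, hgB⟩ := growth_bound N hN g hgc g₀ gI hg0 hgi
  set C : ℝ := max Cf Cg with hCdef
  have hC : 0 < C := lt_of_lt_of_le hCf (le_max_left _ _)
  have hNpos : (0:ℝ) < N := by exact_mod_cast Nat.pos_of_ne_zero (by omega)
  refine ⟨1 / (N * C), by positivity, fun lam hlam hlt hsol => ?_⟩
  obtain ⟨u₁, u₂, hc1, hc2, d₁, d₂, hd1c, hd2c, hu1, hu2, hD1, hD2, h10, h20, h11, h21, hnt⟩ := hsol
  have h0m : (0:ℝ) ∈ Icc (0:ℝ) 1 := ⟨le_rfl, zero_le_one⟩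
  have h1m : (1:ℝ) ∈ Icc (0:ℝ) 1 := ⟨zero_le_one, le_rfl⟩
  have hfB' : ∀ x, 0 ≤ x → f x ≤ C * x ^ N := fun x hx =>
    (hfB x hx).trans (by nlinarith [le_max_left Cf Cg, pow_nonneg hx N])
  have hgB' : ∀ x, 0 ≤ x → g x ≤ C * x ^ N := fun x hx =>
    (hgB x hx).trans (by nlinarith [le_max_right Cf Cg, pow_nonneg hx N])
  obtain ⟨hm1, hd1nn⟩ := conv_mono u₁ d₁ hc1 hu1 h10
  obtain ⟨hm2, hd2nn⟩ := conv_mono u₂ d₂ hc2 hu2 h20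
  have hv1 : ∀ r ∈ Icc (0:ℝ) 1, 0 ≤ -u₁ r ∧ -u₁ r ≤ -u₁ 0 := by
    intro r hr
    have h1 : u₁ r ≤ u₁ 1 := hm1 hr h1m hr.2
    have h2 : u₁ 0 ≤ u₁ r := hm1 h0m hr hr.1
    rw [h11] at h1
    exact ⟨by linarith, by linarith⟩
  have hv2 : ∀ r ∈ Icc (0:ℝ) 1, 0 ≤ -u₂ r ∧ -u₂ r ≤ -u₂ 0 := by
    intro r hr
    have h1 : u₂ r ≤ u₂ 1 := hm2 hr h1m hr.2
    have h2 : u₂ 0 ≤ u₂ r := hm2 h0m hr hr.1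
    rw [h21] at h1
    exact ⟨by linarith, by linarith⟩
  have he1 := key_est N hN C lam hC hlam f hfB' hfnn u₁ u₂ d₁ hd1c hu1 hD1 h10 h11 hv2
  have he2 := key_est N hN C lam hC hlam g hgB' hgnn u₂ u₁ d₂ hd2c hu2 hD2 h20 h21 hv1
  set K : ℝ := (lam * N * C) ^ ((1:ℝ)/N) with hK
  have hKnn : 0 ≤ K := Real.rpow_nonneg (by positivity) _
  have hK1 : K < 1 := by
    apply Real.rpow_lt_one (by positivity)
    · rw [lt_div_iff₀ (by positivity : (0:ℝ) < N * C)] at hlt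
      nlinarith
    · positivity
  have hM1 : 0 ≤ -u₁ 0 := (hv1 0 h0m).1
  have hM2 : 0 ≤ -u₂ 0 := (hv2 0 h0m).1
  have hM10 : -u₁ 0 = 0 := by nlinarith
  have hM20 : -u₂ 0 = 0 := by nlinarith
  apply hnt
  intro t ht
  constructor
  · have h1 : u₁ t ≤ u₁ 1 := hm1 ht h1m ht.2
    have h2 : u₁ 0 ≤ u₁ t := hm1 h0m ht ht.1
    rw [h11] at h1
    linarith [hM10]
  · have h1 : u₂ t ≤ u₂ 1 := hm2 ht h1m ht.2
    have h2 : u₂ 0 ≤ u₂ t := hm2 h0m ht ht.1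
    rw [h21] at h1
    linarith [hM20]
end

section
/- Suppose in addition that f(x) > 0 and g(x) > 0 for all x > 0, and that the limits f₀, g₀, f_∞, g_∞ all exist in [0,∞] and are all strictly positive. Then there exists λ₀ > 0 such that for all λ > λ₀ the system (⋆) has no nontrivial convex solution. -/
open Set Filter
open scoped ENNReal

/-- MVT lower bound wrapper. -/
lemma my_mvt_ge {φ : ℝ → ℝ} {a b C : ℝ} (hab : a ≤ b)
    (hcont : ContinuousOn φ (Icc a b))
    (hder : ∀ r ∈ Ioo a b, ∃ v, HasDerivAt φ v r ∧ C ≤ v) :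
    C * (b - a) ≤ φ b - φ a := by
  have hD : Convex ℝ (Icc a b) := convex_Icc a b
  have hdiff : DifferentiableOn ℝ φ (interior (Icc a b)) := by
    rw [interior_Icc]
    intro r hr
    obtain ⟨v, hv, -⟩ := hder r hr
    exact hv.differentiableAt.differentiableWithinAt
  have hge : ∀ r ∈ interior (Icc a b), C ≤ deriv φ r := by
    rw [interior_Icc]
    intro r hr
    obtain ⟨v, hv, hCv⟩ := hder r hr
    rw [hv.deriv]; exact hCv
  exact hD.mul_sub_le_image_sub_of_le_deriv hcont hdiff hge a ⟨le_refl a, hab⟩ b ⟨hab, le_refl b⟩ hab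

/-- MVT upper bound wrapper. -/
lemma my_mvt_le {φ : ℝ → ℝ} {a b C : ℝ} (hab : a ≤ b)
    (hcont : ContinuousOn φ (Icc a b))
    (hder : ∀ r ∈ Ioo a b, ∃ v, HasDerivAt φ v r ∧ v ≤ C) :
    φ b - φ a ≤ C * (b - a) := by
  have hD : Convex ℝ (Icc a b) := convex_Icc a b
  have hdiff : DifferentiableOn ℝ φ (interior (Icc a b)) := by
    rw [interior_Icc]
    intro r hr
    obtain ⟨v, hv, -⟩ := hder r hr
    exact hv.differentiableAt.differentiableWithinAt
  have hge : ∀ r ∈ interior (Icc a b), deriv φ r ≤ C := by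
    rw [interior_Icc]
    intro r hr
    obtain ⟨v, hv, hCv⟩ := hder r hr
    rw [hv.deriv]; exact hCv
  exact hD.image_sub_le_mul_sub_of_deriv_le hcont hdiff hge a ⟨le_refl a, hab⟩ b ⟨hab, le_refl b⟩ hab

/-- derivative of convex function is monotone -/
lemma my_deriv_mono {u d : ℝ → ℝ} (hc : ConvexOn ℝ (Icc (0:ℝ) 1) u)
    (hd : ∀ r ∈ Icc (0:ℝ) 1, HasDerivWithinAt u (d r) (Icc 0 1) r) :
    MonotoneOn d (Icc (0:ℝ) 1) := by
  intro x hx y hy hxy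
  rcases eq_or_lt_of_le hxy with rfl | h
  · exact le_refl _
  calc d x ≤ slope u x y := hc.le_slope_of_hasDerivWithinAt hx hy h (hd x hx)
    _ ≤ d y := hc.slope_le_of_hasDerivWithinAt hx hy h (hd y hy)

lemma my_cont {u d : ℝ → ℝ}
    (hd : ∀ r ∈ Icc (0:ℝ) 1, HasDerivWithinAt u (d r) (Icc 0 1) r) :
    ContinuousOn u (Icc (0:ℝ) 1) :=
  fun r hr => (hd r hr).continuousWithinAt

lemma my_hasDerivAt {u d : ℝ → ℝ}
    (hd : ∀ r ∈ Icc (0:ℝ) 1, HasDerivWithinAt u (d r) (Icc 0 1) r)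
    {r : ℝ} (h0 : 0 < r) (h1 : r < 1) : HasDerivAt u (d r) r :=
  (hd r ⟨h0.le, h1.le⟩).hasDerivAt (Icc_mem_nhds h0 h1)

lemma my_u_mono {u d : ℝ → ℝ}
    (hd : ∀ r ∈ Icc (0:ℝ) 1, HasDerivWithinAt u (d r) (Icc 0 1) r)
    (hmono : MonotoneOn d (Icc (0:ℝ) 1)) (hd0 : d 0 = 0) :
    MonotoneOn u (Icc (0:ℝ) 1) := by
  have hdnn : ∀ r ∈ Icc (0:ℝ) 1, 0 ≤ d r := by
    intro r hr
    calc (0:ℝ) = d 0 := hd0.symm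
      _ ≤ d r := hmono ⟨le_refl _, zero_le_one⟩ hr hr.1
  intro x hx y hy hxy
  have := my_mvt_ge hxy ((my_cont hd).mono (Icc_subset_Icc hx.1 hy.2))
    (fun r hr => ⟨d r, my_hasDerivAt hd (lt_of_le_of_lt hx.1 hr.1) (lt_of_lt_of_le hr.2 hy.2),
      hdnn r ⟨(lt_of_le_of_lt hx.1 hr.1).le, (lt_of_lt_of_le hr.2 hy.2).le⟩⟩)
  nlinarith [this]

/-- if `u(1/2) = 0` then `u ≡ 0` and `d = 0` on `[0, 3/4]`. -/
lemma my_zero_prop {u d : ℝ → ℝ}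
    (hd : ∀ r ∈ Icc (0:ℝ) 1, HasDerivWithinAt u (d r) (Icc 0 1) r)
    (hmono : MonotoneOn d (Icc (0:ℝ) 1)) (hd0 : d 0 = 0) (hu1 : u 1 = 0)
    (hhalf : u (1/2) = 0) :
    (∀ t ∈ Icc (0:ℝ) 1, u t = 0) ∧ (∀ t ∈ Icc (0:ℝ) (3/4:ℝ), d t = 0) := by
  have humono := my_u_mono hd hmono hd0
  have hdnn : ∀ r ∈ Icc (0:ℝ) 1, 0 ≤ d r := by
    intro r hr
    calc (0:ℝ) = d 0 := hd0.symm
      _ ≤ d r := hmono ⟨le_refl _, zero_le_one⟩ hr hr.1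
  have hule : ∀ t ∈ Icc (0:ℝ) 1, u t ≤ 0 := by
    intro t ht
    calc u t ≤ u 1 := humono ht ⟨zero_le_one, le_refl _⟩ ht.2
      _ = 0 := hu1
  have hu34 : u (3/4) = 0 := le_antisymm (hule _ (by norm_num))
    (by calc (0:ℝ) = u (1/2) := hhalf.symm
          _ ≤ u (3/4) := humono (by norm_num) (by norm_num) (by norm_num))
  -- d (3/4) ≤ 0
  have h1 : d (3/4) * (1 - 3/4) ≤ u 1 - u (3/4) := by
    apply my_mvt_ge (by norm_num) ((my_cont hd).mono (Icc_subset_Icc (by norm_num) (le_refl _)))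
    intro r hr
    exact ⟨d r, my_hasDerivAt hd (by linarith [hr.1]) hr.2,
      hmono (by norm_num) ⟨by linarith [hr.1], hr.2.le⟩ hr.1.le⟩
  rw [hu1, hu34] at h1
  have hd34 : d (3/4) = 0 := le_antisymm (by linarith) (hdnn _ (by norm_num))
  have hdzero : ∀ t ∈ Icc (0:ℝ) (3/4:ℝ), d t = 0 := by
    intro t ht
    refine le_antisymm ?_ (hdnn t ⟨ht.1, by linarith [ht.2]⟩)
    calc d t ≤ d (3/4) := hmono ⟨ht.1, by linarith [ht.2]⟩ (by norm_num) ht.2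
      _ = 0 := hd34
  -- u 0 = 0
  have h2 : u (3/4) - u 0 ≤ 0 * (3/4 - 0) := by
    apply my_mvt_le (by norm_num) ((my_cont hd).mono (Icc_subset_Icc (le_refl _) (by norm_num)))
    intro r hr
    exact ⟨d r, my_hasDerivAt hd hr.1 (by linarith [hr.2]),
      le_of_eq (hdzero r ⟨hr.1.le, hr.2.le⟩)⟩
  rw [hu34] at h2
  have hu0 : u 0 = 0 := le_antisymm (hule _ (by norm_num)) (by linarith)
  refine ⟨fun t ht => le_antisymm (hule t ht) ?_, hdzero⟩
  calc (0:ℝ) = u 0 := hu0.symm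
    _ ≤ u t := humono (by norm_num) ht ht.1

/-- if `d ≡ 0` on `[0,3/4]` then the other component `v` is identically zero. -/
lemma my_other_zero {N : ℕ} (hN : 1 ≤ N) {lam : ℝ} (hlam : 0 < lam)
    {v d g : ℝ → ℝ}
    (hconv : ConvexOn ℝ (Icc (0:ℝ) 1) v)
    (hvle : ∀ t ∈ Icc (0:ℝ) 1, v t ≤ 0)
    (hvmono : MonotoneOn v (Icc (0:ℝ) 1))
    (hdz : ∀ t ∈ Icc (0:ℝ) (3/4:ℝ), d t = 0)
    (hode : ∀ r ∈ Ioo (0:ℝ) 1,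
      HasDerivWithinAt (fun s => (d s) ^ N) (lam * N * r ^ (N - 1) * g (-v r)) (Ioo 0 1) r)
    (hgpos : ∀ x : ℝ, 0 < x → 0 < g x) :
    ∀ t ∈ Icc (0:ℝ) 1, v t = 0 := by
  have key : ∀ r ∈ Ioo (0:ℝ) (3/4:ℝ), v r = 0 := by
    intro r hr
    have hr1 : r ∈ Ioo (0:ℝ) 1 := ⟨hr.1, by linarith [hr.2]⟩
    have hDA : HasDerivAt (fun s => (d s) ^ N) (lam * N * r ^ (N - 1) * g (-v r)) r :=
      (hode r hr1).hasDerivAt (isOpen_Ioo.mem_nhds hr1)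
    have heq : (fun s => (d s) ^ N) =ᶠ[nhds r] (fun _ => (0:ℝ)) := by
      filter_upwards [isOpen_Ioo.mem_nhds (show r ∈ Ioo (0:ℝ) (3/4:ℝ) from hr)] with s hs
      rw [hdz s ⟨hs.1.le, hs.2.le⟩]
      exact zero_pow (by omega)
    have hDA0 : HasDerivAt (fun _ => (0:ℝ)) (lam * N * r ^ (N - 1) * g (-v r)) r :=
      (Filter.EventuallyEq.hasDerivAt_iff heq).mp hDA
    have hval : lam * N * r ^ (N - 1) * g (-v r) = 0 :=
      hDA0.unique (hasDerivAt_const r 0)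
    have hfac : lam * (N:ℝ) * r ^ (N - 1) > 0 := by
      have : (0:ℝ) < (N:ℝ) := by exact_mod_cast Nat.lt_of_lt_of_le Nat.zero_lt_one hN
      exact mul_pos (mul_pos hlam this) (pow_pos hr.1 _)
    have hg0 : g (-v r) = 0 := by
      rcases mul_eq_zero.mp hval with h | h
      · exact absurd h hfac.ne'
      · exact h
    by_contra hvne
    have hvneg : v r < 0 := lt_of_le_of_ne (hvle r ⟨hr1.1.le, hr1.2.le⟩) hvne
    have := hgpos (-v r) (by linarith)
    rw [hg0] at this
    exact lt_irrefl 0 this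
  have hvhalf : v (1/2) = 0 := key (1/2) (by norm_num)
  intro t ht
  rcases le_or_gt (1/2 : ℝ) t with h | h
  · refine le_antisymm (hvle t ht) ?_
    calc (0:ℝ) = v (1/2) := hvhalf.symm
      _ ≤ v t := hvmono (by norm_num) ht h
  · rcases eq_or_lt_of_le ht.1 with rfl | ht0
    · -- t = 0 : use convexity midpoint with 0 and 1/2
      have hmid := hconv.2 (show (0:ℝ) ∈ Icc (0:ℝ) 1 by norm_num)
        (show (1/2:ℝ) ∈ Icc (0:ℝ) 1 by norm_num)
        (by norm_num : (0:ℝ) ≤ (1/2:ℝ)) (by norm_num : (0:ℝ) ≤ (1/2:ℝ)) (by norm_num)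
      simp only [smul_eq_mul] at hmid
      have hq : v (1/4) = 0 := key (1/4) (by norm_num)
      have : v ((1/2) * 0 + (1/2) * (1/2)) ≤ 1/2 * v 0 + 1/2 * v (1/2) := hmid
      norm_num [hq, hvhalf] at this
      exact le_antisymm (hvle 0 (by norm_num)) this
    · exact key t ⟨ht0, by linarith⟩

lemma my_side_est {N : ℕ} (hN : 1 ≤ N) {lam c B : ℝ} {u d w : ℝ → ℝ}
    (hlam : 0 < lam) (hc : 0 ≤ c)
    (hdcont : ContinuousOn d (Icc (0:ℝ) 1))
    (hder : ∀ r ∈ Icc (0:ℝ) 1, HasDerivWithinAt u (d r) (Icc 0 1) r)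
    (hmono : MonotoneOn d (Icc (0:ℝ) 1))
    (hd0 : d 0 = 0) (hu1 : u 1 = 0)
    (hode : ∀ r ∈ Ioo (0:ℝ) 1,
      HasDerivWithinAt (fun s => (d s) ^ N) (lam * N * r ^ (N - 1) * w r) (Ioo 0 1) r)
    (hBnn : 0 ≤ B)
    (hw : ∀ r ∈ Ioo (0:ℝ) (1/2:ℝ), c * B ^ N ≤ w r) :
    lam * c * (8:ℝ)⁻¹ ^ N * B ^ N ≤ (-u (1/2)) ^ N := by
  have hdnn : ∀ r ∈ Icc (0:ℝ) 1, 0 ≤ d r := by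
    intro r hr
    calc (0:ℝ) = d 0 := hd0.symm
      _ ≤ d r := hmono ⟨le_refl _, zero_le_one⟩ hr hr.1
  have hNreal : (1:ℝ) ≤ (N:ℝ) := by exact_mod_cast hN
  set P : ℝ := (4:ℝ)⁻¹ ^ (N - 1) with hP'
  set C₁ : ℝ := lam * N * P * (c * B ^ N) with hC₁
  set D : ℝ := d (1/2) with hD
  have hsub1 : N - 1 + 1 = N := Nat.sub_add_cancel hN
  have h4N : (4:ℝ)⁻¹ ^ N = P * 4⁻¹ := by
    rw [hP', ← pow_succ, hsub1]
  have hP : (8:ℝ)⁻¹ ^ N = P * 4⁻¹ * 2⁻¹ ^ N := by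
    have h8 : (8:ℝ)⁻¹ = 4⁻¹ * 2⁻¹ := by norm_num
    rw [h8, mul_pow, h4N]
  -- Step 1 : lower bound for (d (1/2))^N
  have step1 : C₁ * (1/2 - 1/4) ≤ (fun s => (d s) ^ N) (1/2 : ℝ) - (fun s => (d s) ^ N) (1/4 : ℝ) := by
    apply my_mvt_ge (by norm_num)
      ((hdcont.mono (Icc_subset_Icc (by norm_num) (by norm_num))).pow N)
    intro r hr
    have hr01 : r ∈ Ioo (0:ℝ) 1 := ⟨by linarith [hr.1], by linarith [hr.2]⟩
    refine ⟨lam * N * r ^ (N - 1) * w r,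
      (hode r hr01).hasDerivAt (isOpen_Ioo.mem_nhds hr01), ?_⟩
    have hrnn : (0:ℝ) ≤ r := by linarith [hr.1]
    have h4 : P ≤ r ^ (N - 1) := by
      rw [hP']
      exact pow_le_pow_left₀ (by norm_num) (by linarith [hr.1]) _
    have hwr : c * B ^ N ≤ w r := hw r ⟨by linarith [hr.1], hr.2⟩
    have hcB : (0:ℝ) ≤ c * B ^ N := by positivity
    have h5 : P * (c * B ^ N) ≤ r ^ (N - 1) * w r :=
      mul_le_mul h4 hwr hcB (pow_nonneg hrnn _)
    calc C₁ = lam * N * (P * (c * B ^ N)) := by rw [hC₁]; ring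
      _ ≤ lam * N * (r ^ (N - 1) * w r) := by
          apply mul_le_mul_of_nonneg_left h5
          positivity
      _ = lam * N * r ^ (N - 1) * w r := by ring
  simp only at step1
  have h14 : (0:ℝ) ≤ (d (1/4)) ^ N := pow_nonneg (hdnn _ (by norm_num)) N
  have e3 : C₁ * (1/2 - 1/4 : ℝ) ≤ D ^ N := by rw [hD]; linarith
  -- Step 2 : -u(1/2) ≥ D/2
  have step2 : D * (1 - 1/2) ≤ u 1 - u (1/2) := by
    apply my_mvt_ge (by norm_num) ((my_cont hder).mono (Icc_subset_Icc (by norm_num) le_rfl))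
    intro r hr
    refine ⟨d r, my_hasDerivAt hder (by linarith [hr.1]) hr.2, ?_⟩
    rw [hD]
    exact hmono (by norm_num) ⟨by linarith [hr.1], hr.2.le⟩ hr.1.le
  rw [hu1] at step2
  have hDnn : 0 ≤ D := hdnn _ (by norm_num)
  have hD2 : D / 2 ≤ -u (1/2) := by linarith
  have e1 : (D / 2) ^ N ≤ (-u (1/2)) ^ N :=
    pow_le_pow_left₀ (div_nonneg hDnn (by norm_num)) hD2 N
  have e2 : (D / 2) ^ N = D ^ N * 2⁻¹ ^ N := by
    rw [div_pow, inv_pow, div_eq_mul_inv]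
  have base_nn : 0 ≤ lam * c * (8:ℝ)⁻¹ ^ N * B ^ N := by positivity
  calc lam * c * (8:ℝ)⁻¹ ^ N * B ^ N
      = lam * c * (8:ℝ)⁻¹ ^ N * B ^ N * 1 := (mul_one _).symm
    _ ≤ lam * c * (8:ℝ)⁻¹ ^ N * B ^ N * N := mul_le_mul_of_nonneg_left hNreal base_nn
    _ = C₁ * (1/2 - 1/4) * 2⁻¹ ^ N := by rw [hC₁, hP]; ring
    _ ≤ D ^ N * 2⁻¹ ^ N := mul_le_mul_of_nonneg_right e3 (by positivity)
    _ = (D / 2) ^ N := e2.symm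
    _ ≤ (-u (1/2)) ^ N := e1
lemma my_lower_bound (N : ℕ) (hN : 1 ≤ N) (f : ℝ → ℝ)
    (hfc : ContinuousOn f (Ici 0)) (hfnn : ∀ x, 0 ≤ x → 0 ≤ f x)
    (hfpos : ∀ x, 0 < x → 0 < f x) (f₀ fI : ℝ≥0∞) (hf₀ : 0 < f₀) (hfI : 0 < fI)
    (h0 : Tendsto (fun x => ENNReal.ofReal (f x / x ^ N)) (nhdsWithin 0 (Ioi 0)) (nhds f₀))
    (hi : Tendsto (fun x => ENNReal.ofReal (f x / x ^ N)) atTop (nhds fI)) :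
    ∃ c : ℝ, 0 < c ∧ ∀ x, 0 ≤ x → c * x ^ N ≤ f x := by
  -- near 0
  obtain ⟨a, ha0, haf⟩ := exists_between hf₀
  have hane : a ≠ ⊤ := haf.ne_top
  set ε₁ : ℝ := a.toReal with hε₁def
  have hε₁ : 0 < ε₁ := ENNReal.toReal_pos ha0.ne' hane
  have hev0 : ∀ᶠ x in nhdsWithin (0:ℝ) (Ioi 0), ε₁ < f x / x ^ N := by
    filter_upwards [h0.eventually_const_lt haf] with x hx
    by_contra hcon
    push_neg at hcon
    have : ENNReal.ofReal (f x / x ^ N) ≤ ENNReal.ofReal ε₁ := ENNReal.ofReal_le_ofReal hcon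
    rw [hε₁def, ENNReal.ofReal_toReal hane] at this
    exact absurd hx (not_lt.mpr this)
  obtain ⟨δ, hδmem, hδ⟩ := mem_nhdsGT_iff_exists_Ioo_subset.mp hev0
  have hδ0 : (0:ℝ) < δ := hδmem
  -- near ∞
  obtain ⟨b, hb0, hbf⟩ := exists_between hfI
  have hbne : b ≠ ⊤ := hbf.ne_top
  set ε₂ : ℝ := b.toReal with hε₂def
  have hε₂ : 0 < ε₂ := ENNReal.toReal_pos hb0.ne' hbne
  have hevI : ∀ᶠ x in atTop, ε₂ < f x / x ^ N := by
    filter_upwards [hi.eventually_const_lt hbf] with x hx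
    by_contra hcon
    push_neg at hcon
    have : ENNReal.ofReal (f x / x ^ N) ≤ ENNReal.ofReal ε₂ := ENNReal.ofReal_le_ofReal hcon
    rw [hε₂def, ENNReal.ofReal_toReal hbne] at this
    exact absurd hx (not_lt.mpr this)
  obtain ⟨M, hM⟩ := eventually_atTop.mp hevI
  -- compact middle part
  set M₁ : ℝ := max M δ with hM₁def
  have hM₁δ : δ ≤ M₁ := le_max_right _ _
  have hM₁0 : 0 < M₁ := lt_of_lt_of_le hδ0 hM₁δ
  have hKne : (Icc (δ/2) M₁).Nonempty := ⟨δ/2, le_refl _, by linarith⟩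
  have hKsub : Icc (δ/2) M₁ ⊆ Ici 0 := fun x hx => le_trans (by linarith) hx.1
  obtain ⟨x₀, hx₀K, hx₀min⟩ := isCompact_Icc.exists_isMinOn hKne (hfc.mono hKsub)
  have hm : 0 < f x₀ := hfpos x₀ (lt_of_lt_of_le (by linarith) hx₀K.1)
  set c₃ : ℝ := f x₀ / M₁ ^ N with hc₃def
  have hc₃ : 0 < c₃ := div_pos hm (pow_pos hM₁0 N)
  refine ⟨min ε₁ (min ε₂ c₃), by positivity, ?_⟩
  intro x hx
  rcases eq_or_lt_of_le hx with rfl | hx0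
  · simp [zero_pow (by omega : N ≠ 0)]
    exact hfnn 0 le_rfl
  have hxN : (0:ℝ) < x ^ N := pow_pos hx0 N
  rcases lt_or_ge x δ with hxδ | hxδ
  · have h3 : ε₁ < f x / x ^ N := hδ ⟨hx0, hxδ⟩
    have h2 : ε₁ * x ^ N ≤ f x := by
      rw [lt_div_iff₀ hxN] at h3; linarith
    calc min ε₁ (min ε₂ c₃) * x ^ N ≤ ε₁ * x ^ N := by
          apply mul_le_mul_of_nonneg_right (min_le_left _ _) hxN.le
      _ ≤ f x := h2
  rcases le_or_gt x M₁ with hxM | hxM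
  · have hxK : x ∈ Icc (δ/2) M₁ := ⟨by linarith, hxM⟩
    have h1 : f x₀ ≤ f x := hx₀min hxK
    have h2 : x ^ N ≤ M₁ ^ N := pow_le_pow_left₀ hx hxM N  -- check name
    calc min ε₁ (min ε₂ c₃) * x ^ N ≤ c₃ * x ^ N := by
          apply mul_le_mul_of_nonneg_right (le_trans (min_le_right _ _) (min_le_right _ _)) hxN.le
      _ ≤ c₃ * M₁ ^ N := by apply mul_le_mul_of_nonneg_left h2 hc₃.le
      _ = f x₀ := by rw [hc₃def]; field_simp
      _ ≤ f x := h1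
  · have hxM' : M ≤ x := le_trans (le_max_left M δ) hxM.le
    have h3 : ε₂ < f x / x ^ N := hM x hxM'
    have h2 : ε₂ * x ^ N ≤ f x := by
      rw [lt_div_iff₀ hxN] at h3; linarith
    calc min ε₁ (min ε₂ c₃) * x ^ N ≤ ε₂ * x ^ N := by
          apply mul_le_mul_of_nonneg_right (le_trans (min_le_right _ _) (min_le_left _ _)) hxN.le
      _ ≤ f x := h2

/-- Theorem 2(f): if `f, g > 0` on `(0,∞)` and the limits `f₀, g₀, f_∞, g_∞` all exist in
`[0,∞]` (formalized as `ℝ≥0∞`-valued limits) and are strictly positive, then there is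
`λ₀ > 0` such that for all `λ > λ₀` the system (⋆) has no nontrivial convex solution. -/
theorem nonexistence_large_lambda
    (N : ℕ) (hN : 1 ≤ N) (f g : ℝ → ℝ)
    (hfc : ContinuousOn f (Ici 0)) (hgc : ContinuousOn g (Ici 0))
    (hfnn : ∀ x, 0 ≤ x → 0 ≤ f x) (hgnn : ∀ x, 0 ≤ x → 0 ≤ g x)
    (hfpos : ∀ x : ℝ, 0 < x → 0 < f x) (hgpos : ∀ x : ℝ, 0 < x → 0 < g x)
    (f₀ g₀ fI gI : ℝ≥0∞) (hf₀pos : 0 < f₀) (hg₀pos : 0 < g₀)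
    (hfIpos : 0 < fI) (hgIpos : 0 < gI)
    (hf0 : Tendsto (fun x => ENNReal.ofReal (f x / x ^ N)) (nhdsWithin 0 (Ioi 0)) (nhds f₀))
    (hg0 : Tendsto (fun x => ENNReal.ofReal (g x / x ^ N)) (nhdsWithin 0 (Ioi 0)) (nhds g₀))
    (hfi : Tendsto (fun x => ENNReal.ofReal (f x / x ^ N)) atTop (nhds fI))
    (hgi : Tendsto (fun x => ENNReal.ofReal (g x / x ^ N)) atTop (nhds gI)) :
    ∃ lam₀ : ℝ, 0 < lam₀ ∧ ∀ lam : ℝ, lam₀ < lam →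
      ¬ ∃ u₁ u₂ : ℝ → ℝ, IsNontrivialConvexSolution N f g lam u₁ u₂ := by
  obtain ⟨cf, hcf, hflb⟩ := my_lower_bound N hN f hfc hfnn hfpos f₀ fI hf₀pos hfIpos hf0 hfi
  obtain ⟨cg, hcg, hglb⟩ := my_lower_bound N hN g hgc hgnn hgpos g₀ gI hg₀pos hgIpos hg0 hgi
  set c : ℝ := min cf cg with hcdef
  have hc : 0 < c := lt_min hcf hcg
  refine ⟨8 ^ N / c, by positivity, ?_⟩
  rintro lam hlamgt ⟨u₁, u₂, hc1, hc2, d₁, d₂, hd1c, hd2c, hu1d, hu2d, hode1, hode2,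
    hd10, hd20, hu11, hu21, hnt⟩
  have hlam : 0 < lam := lt_trans (by positivity) hlamgt
  have hmono1 := my_deriv_mono hc1 hu1d
  have hmono2 := my_deriv_mono hc2 hu2d
  have humono1 := my_u_mono hu1d hmono1 hd10
  have humono2 := my_u_mono hu2d hmono2 hd20
  have hle1 : ∀ t ∈ Icc (0:ℝ) 1, u₁ t ≤ 0 := by
    intro t ht
    calc u₁ t ≤ u₁ 1 := humono1 ht ⟨zero_le_one, le_refl _⟩ ht.2
      _ = 0 := hu11
  have hle2 : ∀ t ∈ Icc (0:ℝ) 1, u₂ t ≤ 0 := by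
    intro t ht
    calc u₂ t ≤ u₂ 1 := humono2 ht ⟨zero_le_one, le_refl _⟩ ht.2
      _ = 0 := hu21
  -- positivity of A and B
  have hA : 0 < -u₁ (1/2) := by
    rcases lt_or_eq_of_le (hle1 (1/2) (by norm_num)) with h | h
    · linarith
    · exfalso
      obtain ⟨hu₁z, hd₁z⟩ := my_zero_prop hu1d hmono1 hd10 hu11 h
      have hu₂z := my_other_zero hN hlam hc2 hle2 humono2 hd₁z hode1 hfpos
      exact hnt (fun t ht => ⟨hu₁z t ht, hu₂z t ht⟩)
  have hB : 0 < -u₂ (1/2) := by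
    rcases lt_or_eq_of_le (hle2 (1/2) (by norm_num)) with h | h
    · linarith
    · exfalso
      obtain ⟨hu₂z, hd₂z⟩ := my_zero_prop hu2d hmono2 hd20 hu21 h
      have hu₁z := my_other_zero hN hlam hc1 hle1 humono1 hd₂z hode2 hgpos
      exact hnt (fun t ht => ⟨hu₁z t ht, hu₂z t ht⟩)
  -- the two side estimates
  have hest1 : lam * c * (8:ℝ)⁻¹ ^ N * (-u₂ (1/2)) ^ N ≤ (-u₁ (1/2)) ^ N := by
    apply my_side_est hN hlam hc.le hd1c hu1d hmono1 hd10 hu11 hode1 hB.le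
    intro r hr
    have hu2r : u₂ r ≤ u₂ (1/2) :=
      humono2 ⟨hr.1.le, by linarith [hr.2]⟩ (by norm_num) hr.2.le
    have hnn : (0:ℝ) ≤ -u₂ r := by linarith
    calc c * (-u₂ (1/2)) ^ N
        ≤ c * (-u₂ r) ^ N := by
          apply mul_le_mul_of_nonneg_left (pow_le_pow_left₀ hB.le (by linarith) N) hc.le
      _ ≤ cf * (-u₂ r) ^ N :=
          mul_le_mul_of_nonneg_right (min_le_left _ _) (by positivity)
      _ ≤ f (-u₂ r) := hflb _ hnn
  have hest2 : lam * c * (8:ℝ)⁻¹ ^ N * (-u₁ (1/2)) ^ N ≤ (-u₂ (1/2)) ^ N := by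
    apply my_side_est hN hlam hc.le hd2c hu2d hmono2 hd20 hu21 hode2 hA.le
    intro r hr
    have hu1r : u₁ r ≤ u₁ (1/2) :=
      humono1 ⟨hr.1.le, by linarith [hr.2]⟩ (by norm_num) hr.2.le
    have hnn : (0:ℝ) ≤ -u₁ r := by linarith
    calc c * (-u₁ (1/2)) ^ N
        ≤ c * (-u₁ r) ^ N := by
          apply mul_le_mul_of_nonneg_left (pow_le_pow_left₀ hA.le (by linarith) N) hc.le
      _ ≤ cg * (-u₁ r) ^ N :=
          mul_le_mul_of_nonneg_right (min_le_right _ _) (by positivity)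
      _ ≤ g (-u₁ r) := hglb _ hnn
  -- conclude
  have ht1 : 1 < lam * c * (8:ℝ)⁻¹ ^ N := by
    rw [div_lt_iff₀ hc] at hlamgt
    rw [inv_pow]
    rw [show lam * c * ((8:ℝ) ^ N)⁻¹ = lam * c / 8 ^ N by ring]
    rw [lt_div_iff₀ (by positivity : (0:ℝ) < (8:ℝ) ^ N)]
    linarith
  have hApow : 0 < (-u₁ (1/2)) ^ N := pow_pos hA N
  have hBpow : 0 < (-u₂ (1/2)) ^ N := pow_pos hB N
  nlinarith [hest1, hest2, hApow, hBpow, ht1]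
end

section
/- Let N ≥ 1 be an integer and f : [0,∞) → [0,∞) continuous, and define f̂(t) = max{f(v) : 0 ≤ v ≤ t}. If f(x)/x^N tends to a limit L ∈ [0,∞] as x → ∞, then f̂(t)/t^N also tends to L as t → ∞. -/
open Set Filter
open scoped ENNReal

/-!
The running maximum at `t` is a value `f x` with `x ≤ t`. Given a threshold `A`, either
`x ≥ A`, and then `f x / t^N ≤ f x / x^N` lies below any `b > L` once `A` is large, or `x < A`,
and then `f x / t^N ≤ f̂ A / t^N → 0`. The matching lower bound is `f t ≤ f̂ t`.
-/

theorem ENNReal.ofReal_div_le_ofReal_div_of_le {a c d : ℝ} (hc : 0 < c) (hcd : c ≤ d) :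
    ENNReal.ofReal (a / d) ≤ ENNReal.ofReal (a / c) := by
  rcases le_total a 0 with ha | ha
  · rw [ENNReal.ofReal_of_nonpos (div_nonpos_of_nonpos_of_nonneg ha (hc.le.trans hcd))]
    exact zero_le
  · gcongr

theorem tendsto_ofReal_sSup_image_Icc_div {f φ : ℝ → ℝ} (hfc : ContinuousOn f (Ici 0))
    (hφ : Tendsto φ atTop atTop) (hφm : MonotoneOn φ (Ici 0)) {L : ℝ≥0∞}
    (hL : Tendsto (fun x => ENNReal.ofReal (f x / φ x)) atTop (nhds L)) :
    Tendsto (fun t => ENNReal.ofReal (sSup (f '' Icc (0:ℝ) t) / φ t)) atTop (nhds L) := by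
  have hmax : ∀ t, 0 ≤ t → ∃ x ∈ Icc 0 t,
      sSup (f '' Icc 0 t) = f x ∧ ∀ y ∈ Icc 0 t, f y ≤ f x := fun t ht =>
    isCompact_Icc.exists_sSup_image_eq_and_ge (nonempty_Icc.2 ht) (hfc.mono Icc_subset_Ici_self)
  rw [tendsto_order]
  constructor
  · intro a ha
    filter_upwards [hL.eventually (lt_mem_nhds ha), hφ.eventually_gt_atTop 0,
      eventually_ge_atTop 0] with t hat hφt ht
    obtain ⟨x, -, hx, hge⟩ := hmax t ht
    rw [hx]
    exact hat.trans_le (by gcongr; exact hge t ⟨ht, le_rfl⟩)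
  · intro b hb
    obtain ⟨A, hA⟩ := eventually_atTop.1 <| (hL.eventually (gt_mem_nhds hb)).and <|
      (hφ.eventually_gt_atTop 0).and (eventually_ge_atTop 0)
    obtain ⟨xA, -, -, hgeA⟩ := hmax A (hA A le_rfl).2.2
    have hsmall : Tendsto (fun t => ENNReal.ofReal (f xA / φ t)) atTop (nhds 0) := by
      simpa using ENNReal.tendsto_ofReal (tendsto_const_nhds.div_atTop hφ)
    filter_upwards [hsmall.eventually (gt_mem_nhds (zero_le.trans_lt hb)),
      eventually_ge_atTop A] with t htb htA
    obtain ⟨hφt, ht⟩ := (hA t htA).2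
    obtain ⟨x, ⟨hx0, hxt⟩, hx, -⟩ := hmax t ht
    rw [hx]
    rcases le_or_gt A x with hAx | hxA
    · obtain ⟨hxb, hφx, -⟩ := hA x hAx
      exact (ENNReal.ofReal_div_le_ofReal_div_of_le hφx (hφm hx0 ht hxt)).trans_lt hxb
    · refine lt_of_le_of_lt ?_ htb
      gcongr
      exact hgeA x ⟨hx0, hxA.le⟩

theorem running_max_limit_at_infty_general
    (N : ℕ) (hN : 1 ≤ N) (f : ℝ → ℝ)
    (hfc : ContinuousOn f (Ici 0))
    (L : ℝ≥0∞)
    (hL : Tendsto (fun x => ENNReal.ofReal (f x / x ^ N)) atTop (nhds L)) :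
    Tendsto (fun t => ENNReal.ofReal (sSup (f '' Icc (0:ℝ) t) / t ^ N))
      atTop (nhds L) :=
  tendsto_ofReal_sSup_image_Icc_div hfc (tendsto_pow_atTop (by omega)) pow_left_monotoneOn hL

/-- Lemma 5 (at infinity): let `f : [0,∞) → [0,∞)` be continuous, `N ≥ 1`, and let
`f̂(t) = max{f(v) : 0 ≤ v ≤ t}`. If `f(x)/x^N` tends to `L ∈ [0,∞]` as `x → ∞`
(limits in `[0,∞]` formalized via `ℝ≥0∞`), then `f̂(t)/t^N → L` as `t → ∞`. -/
theorem running_max_limit_at_infty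
    (N : ℕ) (hN : 1 ≤ N) (f : ℝ → ℝ)
    (hfc : ContinuousOn f (Ici 0)) (hfnn : ∀ x, 0 ≤ x → 0 ≤ f x)
    (L : ℝ≥0∞)
    (hL : Tendsto (fun x => ENNReal.ofReal (f x / x ^ N)) atTop (nhds L)) :
    Tendsto (fun t => ENNReal.ofReal (sSup (f '' Icc (0:ℝ) t) / t ^ N))
      atTop (nhds L) :=
  running_max_limit_at_infty_general N hN f hfc L hL
end

section
/- Let (v₁, v₂) ∈ K and η > 0. If f(v₂(t)) ≥ (η v₂(t))^N for all t ∈ [1/4, 3/4], then ‖T_λ(v₁,v₂)‖ ≥ λ^{1/N} Γ η ‖v₂‖_∞; and if g(v₁(t)) ≥ (η v₁(t))^N for all t ∈ [1/4, 3/4], then ‖T_λ(v₁,v₂)‖ ≥ λ^{1/N} Γ η ‖v₁‖_∞. -/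
open Set Filter MeasureTheory intervalIntegral

/-- Sup norm of a function over `[0,1]`. -/
noncomputable def supNorm (v : ℝ → ℝ) : ℝ :=
  sSup ((fun t => |v t|) '' Icc (0:ℝ) 1)

/-- Membership in the cone
`K = {(v₁,v₂) : vᵢ ≥ 0 on [0,1], min_{1/4 ≤ t ≤ 3/4} vᵢ(t) ≥ (1/4)‖vᵢ‖_∞, i = 1,2}`
(inside `C([0,1]) × C([0,1])`). -/
def InCone (v₁ v₂ : ℝ → ℝ) : Prop :=
  ContinuousOn v₁ (Icc 0 1) ∧ ContinuousOn v₂ (Icc 0 1) ∧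
  (∀ t ∈ Icc (0:ℝ) 1, 0 ≤ v₁ t) ∧ (∀ t ∈ Icc (0:ℝ) 1, 0 ≤ v₂ t) ∧
  (∀ t ∈ Icc (1/4:ℝ) (3/4), (1/4) * supNorm v₁ ≤ v₁ t) ∧
  (∀ t ∈ Icc (1/4:ℝ) (3/4), (1/4) * supNorm v₂ ≤ v₂ t)

/-- Component of the operator `T_λ`:
`(Tcomp N lam h w) r = ∫_r^1 (λ ∫_0^s N τ^{N-1} h(w(τ)) dτ)^{1/N} ds`;
`T¹_λ(v₁,v₂) = Tcomp N lam f v₂` and `T²_λ(v₁,v₂) = Tcomp N lam g v₁`. -/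
noncomputable def Tcomp (N : ℕ) (lam : ℝ) (h : ℝ → ℝ) (w : ℝ → ℝ) : ℝ → ℝ :=
  fun r => ∫ s in r..1, (lam * ∫ τ in (0:ℝ)..s, (N:ℝ) * τ ^ (N - 1) * h (w τ)) ^ ((N:ℝ)⁻¹)

/-- `Γ = (1/4) ∫_{1/4}^{3/4} (∫_{1/4}^s N τ^{N-1} dτ)^{1/N} ds`. -/
noncomputable def Gam (N : ℕ) : ℝ :=
  (1/4) * ∫ s in (1/4 : ℝ)..(3/4), (∫ τ in (1/4:ℝ)..s, (N:ℝ) * τ ^ (N - 1)) ^ ((N:ℝ)⁻¹)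

lemma supNorm_nonneg (v : ℝ → ℝ) : 0 ≤ supNorm v :=
  Real.sSup_nonneg fun x hx => by
    obtain ⟨t, -, rfl⟩ := hx; exact abs_nonneg _

lemma key_lower (N : ℕ) (hN : 1 ≤ N) (h : ℝ → ℝ)
    (hc : ContinuousOn h (Ici 0)) (hnn : ∀ x, 0 ≤ x → 0 ≤ h x)
    (lam : ℝ) (hlam : 0 < lam)
    (w : ℝ → ℝ) (hw : ContinuousOn w (Icc 0 1))
    (hwnn : ∀ t ∈ Icc (0:ℝ) 1, 0 ≤ w t)
    (η : ℝ) (hη : 0 < η)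
    (hcone : ∀ t ∈ Icc (1/4:ℝ) (3/4), (1/4) * supNorm w ≤ w t)
    (hpt : ∀ t ∈ Icc (1/4:ℝ) (3/4), (η * w t) ^ N ≤ h (w t)) :
    lam ^ ((N:ℝ)⁻¹) * Gam N * η * supNorm w ≤ supNorm (Tcomp N lam h w) := by
  have hN0 : N ≠ 0 := by omega
  have hM : 0 ≤ supNorm w := supNorm_nonneg w
  set M := supNorm w with hMdef
  set c : ℝ := η * ((1/4) * M) with hcdef
  have hc0 : 0 ≤ c := by positivity
  set φ : ℝ → ℝ := fun τ => (N:ℝ) * τ ^ (N - 1) * h (w τ) with hφdef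
  have hφc : ContinuousOn φ (Icc 0 1) :=
    (continuous_const.mul (continuous_pow _)).continuousOn.mul
      (hc.comp hw fun t ht => hwnn t ht)
  have hφnn : ∀ τ ∈ Icc (0:ℝ) 1, 0 ≤ φ τ := fun τ hτ =>
    mul_nonneg (mul_nonneg (Nat.cast_nonneg N) (pow_nonneg hτ.1 _)) (hnn _ (hwnn τ hτ))
  have hφint : ∀ a b : ℝ, a ∈ Icc (0:ℝ) 1 → b ∈ Icc (0:ℝ) 1 →
      IntervalIntegrable φ MeasureTheory.volume a b := fun a b ha hb =>
    (hφc.mono (uIcc_subset_Icc ha hb)).intervalIntegrable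
  set I : ℝ → ℝ := fun s => ∫ τ in (0:ℝ)..s, φ τ with hIdef
  have hIcont : ContinuousOn I (Icc 0 1) := by
    have := continuousOn_primitive_interval
      (f := φ) (μ := MeasureTheory.volume) (a := (0:ℝ)) (b := 1)
      (by rw [uIcc_of_le (by norm_num : (0:ℝ) ≤ 1)]; exact hφc.integrableOn_Icc)
    rwa [uIcc_of_le (by norm_num : (0:ℝ) ≤ 1)] at this
  have hInn : ∀ s ∈ Icc (0:ℝ) 1, 0 ≤ I s := fun s hs =>
    intervalIntegral.integral_nonneg hs.1 fun τ hτ => hφnn τ ⟨hτ.1, hτ.2.trans hs.2⟩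
  have hrpow : Continuous (fun x : ℝ => x ^ ((N:ℝ)⁻¹)) :=
    continuous_iff_continuousAt.2 fun x =>
      Real.continuousAt_rpow_const x _ (Or.inr (by positivity))
  set F : ℝ → ℝ := fun s => (lam * I s) ^ ((N:ℝ)⁻¹) with hFdef
  have hFcont : ContinuousOn F (Icc 0 1) :=
    hrpow.comp_continuousOn (continuous_const.continuousOn.mul hIcont)
  have hFint : ∀ a b : ℝ, a ∈ Icc (0:ℝ) 1 → b ∈ Icc (0:ℝ) 1 →
      IntervalIntegrable F MeasureTheory.volume a b := fun a b ha hb =>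
    (hFcont.mono (uIcc_subset_Icc ha hb)).intervalIntegrable
  have hFnn : ∀ s ∈ Icc (0:ℝ) 1, 0 ≤ F s := fun s hs =>
    Real.rpow_nonneg (mul_nonneg hlam.le (hInn s hs)) _
  have hTeq : ∀ r, Tcomp N lam h w r = ∫ s in r..1, F s := fun r => rfl
  -- The sup norm dominates the value at 1/4.
  have hsup : Tcomp N lam h w (1/4) ≤ supNorm (Tcomp N lam h w) := by
    have hbdd : BddAbove ((fun t => |Tcomp N lam h w t|) '' Icc (0:ℝ) 1) := by
      refine ⟨∫ s in (0:ℝ)..1, |F s|, ?_⟩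
      rintro x ⟨r, hr, rfl⟩
      have h1 : |∫ s in r..1, F s| ≤ ∫ s in r..1, |F s| :=
        intervalIntegral.abs_integral_le_integral_abs hr.2
      have h2 : (∫ s in r..1, |F s|) ≤ ∫ s in (0:ℝ)..1, |F s| :=
        intervalIntegral.integral_mono_interval hr.1 hr.2 le_rfl
          (Filter.Eventually.of_forall fun s => abs_nonneg _)
          (hFint 0 1 (by norm_num) (by norm_num)).abs
      simpa [hTeq] using h1.trans h2
    exact le_trans (le_abs_self _)
      (le_csSup hbdd ⟨1/4, by norm_num, rfl⟩)
  -- pointwise lower bound for F on [1/4, 3/4]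
  have stepC : ∀ s ∈ Icc (1/4:ℝ) (3/4),
      (lam ^ ((N:ℝ)⁻¹) * c) * (∫ τ in (1/4:ℝ)..s, (N:ℝ) * τ ^ (N - 1)) ^ ((N:ℝ)⁻¹)
        ≤ F s := by
    intro s hs
    have hs01 : s ∈ Icc (0:ℝ) 1 := ⟨by linarith [hs.1], by linarith [hs.2]⟩
    set G : ℝ := ∫ τ in (1/4:ℝ)..s, (N:ℝ) * τ ^ (N - 1) with hGdef
    have hG0 : 0 ≤ G :=
      intervalIntegral.integral_nonneg hs.1 fun τ hτ =>
        mul_nonneg (Nat.cast_nonneg N) (pow_nonneg (le_trans (by norm_num) hτ.1) _)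
    have hA : c ^ N * G ≤ ∫ τ in (1/4:ℝ)..s, φ τ := by
      rw [hGdef, ← intervalIntegral.integral_const_mul]
      refine intervalIntegral.integral_mono_on hs.1
        ((continuous_const.mul (continuous_const.mul (continuous_pow _))).intervalIntegrable _ _)
        (hφint _ _ (by norm_num) hs01) ?_
      intro τ hτ
      have hτq : τ ∈ Icc (1/4:ℝ) (3/4) := ⟨hτ.1, hτ.2.trans hs.2⟩
      have hτ01 : τ ∈ Icc (0:ℝ) 1 := ⟨by linarith [hτq.1], by linarith [hτq.2]⟩
      have h1 : c ^ N ≤ (η * w τ) ^ N :=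
        pow_le_pow_left₀ hc0
          (by
            have := hcone τ hτq
            rw [hcdef]
            nlinarith [hη.le]) N
      have h2 : c ^ N ≤ h (w τ) := h1.trans (hpt τ hτq)
      have h3 : 0 ≤ (N:ℝ) * τ ^ (N - 1) :=
        mul_nonneg (Nat.cast_nonneg N) (pow_nonneg hτ01.1 _)
      calc c ^ N * ((N:ℝ) * τ ^ (N - 1)) = (N:ℝ) * τ ^ (N - 1) * c ^ N := by ring
        _ ≤ (N:ℝ) * τ ^ (N - 1) * h (w τ) := mul_le_mul_of_nonneg_left h2 h3
    have hB : (∫ τ in (1/4:ℝ)..s, φ τ) ≤ I s := by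
      refine intervalIntegral.integral_mono_interval (by norm_num) hs.1 le_rfl
        ?_ (hφint 0 s (by norm_num) hs01)
      filter_upwards [MeasureTheory.ae_restrict_mem measurableSet_Ioc] with τ hτ
      exact hφnn τ ⟨hτ.1.le, hτ.2.trans hs01.2⟩
    have hbase : lam * (c ^ N * G) ≤ lam * I s :=
      mul_le_mul_of_nonneg_left (hA.trans hB) hlam.le
    have hmono : (lam * (c ^ N * G)) ^ ((N:ℝ)⁻¹) ≤ (lam * I s) ^ ((N:ℝ)⁻¹) :=
      Real.rpow_le_rpow (by positivity) hbase (by positivity)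
    calc (lam ^ ((N:ℝ)⁻¹) * c) * G ^ ((N:ℝ)⁻¹)
        = (lam * (c ^ N * G)) ^ ((N:ℝ)⁻¹) := by
          rw [Real.mul_rpow hlam.le (by positivity),
            Real.mul_rpow (by positivity) hG0,
            Real.pow_rpow_inv_natCast hc0 hN0]
          ring
      _ ≤ (lam * I s) ^ ((N:ℝ)⁻¹) := hmono
  -- integrate
  have hGcont : Continuous fun s : ℝ =>
      (∫ τ in (1/4:ℝ)..s, (N:ℝ) * τ ^ (N - 1)) := by
    exact intervalIntegral.continuous_primitive
      (fun a b => (continuous_const.mul (continuous_pow _)).intervalIntegrable a b) _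
  have hD : (∫ s in (1/4:ℝ)..(3/4),
        (lam ^ ((N:ℝ)⁻¹) * c) * (∫ τ in (1/4:ℝ)..s, (N:ℝ) * τ ^ (N - 1)) ^ ((N:ℝ)⁻¹))
      ≤ ∫ s in (1/4:ℝ)..(3/4), F s := by
    refine intervalIntegral.integral_mono_on (by norm_num)
      ((continuous_const.mul (hrpow.comp hGcont)).intervalIntegrable _ _)
      (hFint _ _ (by norm_num) (by norm_num)) stepC
  have hE : (∫ s in (1/4:ℝ)..(3/4), F s) ≤ ∫ s in (1/4:ℝ)..1, F s := by
    refine intervalIntegral.integral_mono_interval le_rfl (by norm_num) (by norm_num)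
      ?_ (hFint _ _ (by norm_num) (by norm_num))
    filter_upwards [MeasureTheory.ae_restrict_mem measurableSet_Ioc] with s hsx
    exact hFnn s ⟨by linarith [hsx.1], hsx.2⟩
  calc lam ^ ((N:ℝ)⁻¹) * Gam N * η * M
      = ∫ s in (1/4:ℝ)..(3/4),
          (lam ^ ((N:ℝ)⁻¹) * c) * (∫ τ in (1/4:ℝ)..s, (N:ℝ) * τ ^ (N - 1)) ^ ((N:ℝ)⁻¹) := by
        rw [intervalIntegral.integral_const_mul, Gam, hcdef]; ring
    _ ≤ ∫ s in (1/4:ℝ)..(3/4), F s := hD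
    _ ≤ ∫ s in (1/4:ℝ)..1, F s := hE
    _ = Tcomp N lam h w (1/4) := (hTeq _).symm
    _ ≤ supNorm (Tcomp N lam h w) := hsup

/-- Lemma 4: if `(v₁,v₂) ∈ K`, `η > 0`, and `f(v₂(t)) ≥ (η v₂(t))^N` on `[1/4,3/4]`
(resp. `g(v₁(t)) ≥ (η v₁(t))^N` on `[1/4,3/4]`), then
`‖T_λ(v₁,v₂)‖ ≥ λ^{1/N} Γ η ‖v₂‖_∞` (resp. `‖T_λ(v₁,v₂)‖ ≥ λ^{1/N} Γ η ‖v₁‖_∞`). -/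
theorem operator_lower_estimate
    (N : ℕ) (hN : 1 ≤ N) (f g : ℝ → ℝ)
    (hfc : ContinuousOn f (Ici 0)) (hgc : ContinuousOn g (Ici 0))
    (hfnn : ∀ x, 0 ≤ x → 0 ≤ f x) (hgnn : ∀ x, 0 ≤ x → 0 ≤ g x)
    (lam : ℝ) (hlam : 0 < lam)
    (v₁ v₂ : ℝ → ℝ) (hK : InCone v₁ v₂) (η : ℝ) (hη : 0 < η) :
    ((∀ t ∈ Icc (1/4:ℝ) (3/4), (η * v₂ t) ^ N ≤ f (v₂ t)) →
      lam ^ ((N:ℝ)⁻¹) * Gam N * η * supNorm v₂ ≤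
        supNorm (Tcomp N lam f v₂) + supNorm (Tcomp N lam g v₁)) ∧
    ((∀ t ∈ Icc (1/4:ℝ) (3/4), (η * v₁ t) ^ N ≤ g (v₁ t)) →
      lam ^ ((N:ℝ)⁻¹) * Gam N * η * supNorm v₁ ≤
        supNorm (Tcomp N lam f v₂) + supNorm (Tcomp N lam g v₁)) := by
  obtain ⟨hv₁c, hv₂c, hv₁nn, hv₂nn, hcone₁, hcone₂⟩ := hK
  constructor
  · intro hpt
    exact le_add_of_le_of_nonneg
      (key_lower N hN f hfc hfnn lam hlam v₂ hv₂c hv₂nn η hη hcone₂ hpt)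
      (supNorm_nonneg _)
  · intro hpt
    exact le_add_of_nonneg_of_le (supNorm_nonneg _)
      (key_lower N hN g hgc hgnn lam hlam v₁ hv₁c hv₁nn η hη hcone₁ hpt)
end

section
/- If (v₁, v₂) ∈ K is a fixed point of T_λ (i.e., T¹_λ(v₁,v₂) = v₁ and T²_λ(v₁,v₂) = v₂) with (v₁,v₂) ≠ (0,0), then (u₁, u₂) = (−v₁, −v₂) is a nontrivial convex solution of the system (⋆); conversely, if (u₁, u₂) is a nontrivial convex solution of (⋆), then (−u₁, −u₂) ∈ K and is a fixed point of T_λ. -/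
open Set Filter

/-!
A fixed point `v = Tcomp N lam h w` is `v(r) = ∫_r^1 φ` with `φ = (flux N lam h w)^{1/N}`
continuous, nondecreasing and vanishing at `0`; so `-v` is convex with derivative `φ`, and
`φ^N = flux` has derivative `λ N r^{N-1} h(w r)`. Conversely, the derivative `d` of a convex
solution `u` is nondecreasing with `d 0 = 0`, hence nonnegative: integrating `(d^N)'` from `0`
gives `d = flux^{1/N}`, and integrating `d` up to `1` gives `-u = Tcomp`. The profile `-u` is
nonnegative, nonincreasing and concave, so `-u t ≥ (1 - t) (-u 0) ≥ ‖u‖_∞ / 4` on `[1/4, 3/4]`.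
-/

open intervalIntegral

section Calculus

variable {a b : ℝ} {f f' : ℝ → ℝ}

theorem hasDerivWithinAt_integral_Icc {c x : ℝ} (hf : ContinuousOn f (Icc a b))
    (hc : c ∈ Icc a b) (hx : x ∈ Icc a b) :
    HasDerivWithinAt (fun t => ∫ s in c..t, f s) (f x) (Icc a b) x := by
  have : Fact (x ∈ Icc a b) := ⟨hx⟩
  exact integral_hasDerivWithinAt_right ((hf.mono (uIcc_subset_Icc hc hx)).intervalIntegrable)
    (hf.stronglyMeasurableAtFilter_nhdsWithin measurableSet_Icc x) (hf x hx)

theorem integral_eq_sub_of_hasDerivWithinAt_Icc (hab : a ≤ b)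
    (hf : ∀ x ∈ Icc a b, HasDerivWithinAt f (f' x) (Icc a b) x)
    (hf' : ContinuousOn f' (Icc a b)) :
    ∫ x in a..b, f' x = f b - f a :=
  integral_eq_sub_of_hasDerivAt_of_le hab (fun x hx => (hf x hx).continuousWithinAt)
    (fun x hx => (hf x (Ioo_subset_Icc_self hx)).hasDerivAt (Icc_mem_nhds hx.1 hx.2))
    ((hf'.mono (uIcc_of_le hab).subset).intervalIntegrable)

theorem ConvexOn.monotoneOn_of_hasDerivWithinAt {S : Set ℝ} (hfc : ConvexOn ℝ S f)
    (hf : ∀ x ∈ S, HasDerivWithinAt f (f' x) S x) : MonotoneOn f' S := by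
  intro x hx y hy hxy
  rcases hxy.eq_or_lt with rfl | hxy
  · rfl
  exact (hfc.le_slope_of_hasDerivWithinAt hx hy hxy (hf x hx)).trans
    (hfc.slope_le_of_hasDerivWithinAt hx hy hxy (hf y hy))

theorem MonotoneOn.convexOn_Icc_of_hasDerivWithinAt (hf' : MonotoneOn f' (Icc a b))
    (hf : ∀ x ∈ Icc a b, HasDerivWithinAt f (f' x) (Icc a b) x) : ConvexOn ℝ (Icc a b) f := by
  have hderiv : ∀ x ∈ Ioo a b, HasDerivAt f (f' x) x := fun x hx =>
    (hf x (Ioo_subset_Icc_self hx)).hasDerivAt (Icc_mem_nhds hx.1 hx.2)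
  refine MonotoneOn.convexOn_of_deriv (convex_Icc a b) (fun x hx => (hf x hx).continuousWithinAt)
    ?_ ?_ <;> rw [interior_Icc]
  · exact fun x hx => (hderiv x hx).differentiableAt.differentiableWithinAt
  · intro x hx y hy hxy
    rw [(hderiv x hx).deriv, (hderiv y hy).deriv]
    exact hf' (Ioo_subset_Icc_self hx) (Ioo_subset_Icc_self hy) hxy

theorem monotoneOn_Icc_of_hasDerivWithinAt_nonneg
    (hf : ∀ x ∈ Icc a b, HasDerivWithinAt f (f' x) (Icc a b) x)
    (hf' : ∀ x ∈ Icc a b, 0 ≤ f' x) : MonotoneOn f (Icc a b) := by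
  refine monotoneOn_of_hasDerivWithinAt_nonneg (f' := f') (convex_Icc a b)
    (fun x hx => (hf x hx).continuousWithinAt) ?_ ?_ <;> rw [interior_Icc]
  · exact fun x hx => (hf x (Ioo_subset_Icc_self hx)).mono Ioo_subset_Icc_self
  · exact fun x hx => hf' x (Ioo_subset_Icc_self hx)

end Calculus

section Cone

variable {v : ℝ → ℝ}

theorem supNorm_eq_of_antitoneOn (hv : AntitoneOn v (Icc 0 1))
    (hv₀ : ∀ t ∈ Icc (0:ℝ) 1, 0 ≤ v t) : supNorm v = v 0 := by
  have h0 : (0:ℝ) ∈ Icc (0:ℝ) 1 := left_mem_Icc.2 zero_le_one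
  refine IsGreatest.csSup_eq ⟨⟨0, h0, abs_of_nonneg (hv₀ 0 h0)⟩, ?_⟩
  rintro _ ⟨t, ht, rfl⟩
  change |v t| ≤ v 0
  rw [abs_of_nonneg (hv₀ t ht)]
  exact hv h0 ht ht.1

theorem quarter_supNorm_le_of_concaveOn (hconc : ConcaveOn ℝ (Icc 0 1) v)
    (hanti : AntitoneOn v (Icc 0 1)) (hv₀ : ∀ t ∈ Icc (0:ℝ) 1, 0 ≤ v t)
    {t : ℝ} (ht : t ∈ Icc (1/4:ℝ) (3/4)) : 1/4 * supNorm v ≤ v t := by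
  have h0 : (0:ℝ) ∈ Icc (0:ℝ) 1 := left_mem_Icc.2 zero_le_one
  have h1 : (1:ℝ) ∈ Icc (0:ℝ) 1 := right_mem_Icc.2 zero_le_one
  have hchord : (1 - t) * v 0 + t * v 1 ≤ v t := by
    simpa using hconc.2 h0 h1 (by linarith [ht.2]) (by linarith [ht.1]) (sub_add_cancel 1 t)
  rw [supNorm_eq_of_antitoneOn hanti hv₀]
  nlinarith [hv₀ 0 h0, hv₀ 1 h1, ht.1, ht.2]

end Cone

/-- On a solution, `flux N lam h w` is `(u')^N`; `Tcomp N lam h w` integrates its `N`-th root. -/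
noncomputable def flux (N : ℕ) (lam : ℝ) (h w : ℝ → ℝ) (s : ℝ) : ℝ :=
  lam * ∫ τ in (0:ℝ)..s, (N:ℝ) * τ ^ (N - 1) * h (w τ)

/-- One equation of (⋆) with its boundary conditions: `d` stands for `u'` and `z` for minus the
other unknown. -/
structure IsSolutionComponent (N : ℕ) (lam : ℝ) (h z u d : ℝ → ℝ) : Prop where
  convexOn : ConvexOn ℝ (Icc 0 1) u
  continuousOn_deriv : ContinuousOn d (Icc 0 1)
  hasDerivWithinAt : ∀ r ∈ Icc (0:ℝ) 1, HasDerivWithinAt u (d r) (Icc 0 1) r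
  hasDerivWithinAt_pow : ∀ r ∈ Ioo (0:ℝ) 1,
    HasDerivWithinAt (fun s => d s ^ N) (lam * N * r ^ (N - 1) * h (z r)) (Ioo 0 1) r
  deriv_zero : d 0 = 0
  eq_zero_one : u 1 = 0

theorem isNontrivialConvexSolution_iff {N : ℕ} {f g : ℝ → ℝ} {lam : ℝ} {u₁ u₂ : ℝ → ℝ} :
    IsNontrivialConvexSolution N f g lam u₁ u₂ ↔
      ∃ d₁ d₂, IsSolutionComponent N lam f (fun t => -u₂ t) u₁ d₁ ∧
        IsSolutionComponent N lam g (fun t => -u₁ t) u₂ d₂ ∧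
        ¬ ∀ t ∈ Icc (0:ℝ) 1, u₁ t = 0 ∧ u₂ t = 0 := by
  constructor
  · rintro ⟨hu₁, hu₂, d₁, d₂, hd₁, hd₂, h₁, h₂, e₁, e₂, z₁, z₂, o₁, o₂, hnt⟩
    exact ⟨d₁, d₂, ⟨hu₁, hd₁, h₁, e₁, z₁, o₁⟩, ⟨hu₂, hd₂, h₂, e₂, z₂, o₂⟩, hnt⟩
  · rintro ⟨d₁, d₂, ⟨hu₁, hd₁, h₁, e₁, z₁, o₁⟩, ⟨hu₂, hd₂, h₂, e₂, z₂, o₂⟩, hnt⟩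
    exact ⟨hu₁, hu₂, d₁, d₂, hd₁, hd₂, h₁, h₂, e₁, e₂, z₁, z₂, o₁, o₂, hnt⟩

theorem tcomp_eq_integral_flux (N : ℕ) (lam : ℝ) (h w : ℝ → ℝ) (r : ℝ) :
    Tcomp N lam h w r = ∫ s in r..1, flux N lam h w s ^ (N:ℝ)⁻¹ :=
  rfl

section Flux

variable {N : ℕ} {lam : ℝ} {h w : ℝ → ℝ}

theorem continuousOn_flux_integrand (hh : ContinuousOn h (Ici 0))
    (hw : ContinuousOn w (Icc 0 1)) (hw₀ : ∀ t ∈ Icc (0:ℝ) 1, 0 ≤ w t) :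
    ContinuousOn (fun τ => (N:ℝ) * τ ^ (N - 1) * h (w τ)) (Icc 0 1) :=
  (continuousOn_const.mul (continuousOn_pow _)).mul (hh.comp hw hw₀)

theorem hasDerivWithinAt_flux (hh : ContinuousOn h (Ici 0))
    (hw : ContinuousOn w (Icc 0 1)) (hw₀ : ∀ t ∈ Icc (0:ℝ) 1, 0 ≤ w t)
    {r : ℝ} (hr : r ∈ Icc (0:ℝ) 1) :
    HasDerivWithinAt (flux N lam h w) (lam * (N * r ^ (N - 1) * h (w r))) (Icc 0 1) r :=
  (hasDerivWithinAt_integral_Icc (continuousOn_flux_integrand hh hw hw₀)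
    (left_mem_Icc.2 zero_le_one) hr).const_mul lam

theorem flux_zero : flux N lam h w 0 = 0 := by
  simp [flux]

theorem monotoneOn_flux (hlam : 0 ≤ lam) (hh : ContinuousOn h (Ici 0))
    (hh₀ : ∀ x, 0 ≤ x → 0 ≤ h x) (hw : ContinuousOn w (Icc 0 1))
    (hw₀ : ∀ t ∈ Icc (0:ℝ) 1, 0 ≤ w t) : MonotoneOn (flux N lam h w) (Icc 0 1) :=
  monotoneOn_Icc_of_hasDerivWithinAt_nonneg (fun _ hr => hasDerivWithinAt_flux hh hw hw₀ hr)
    fun r hr => mul_nonneg hlam <|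
      mul_nonneg (mul_nonneg (Nat.cast_nonneg _) (pow_nonneg hr.1 _)) (hh₀ _ (hw₀ r hr))

theorem flux_nonneg (hlam : 0 ≤ lam) (hh : ContinuousOn h (Ici 0))
    (hh₀ : ∀ x, 0 ≤ x → 0 ≤ h x) (hw : ContinuousOn w (Icc 0 1))
    (hw₀ : ∀ t ∈ Icc (0:ℝ) 1, 0 ≤ w t) {s : ℝ} (hs : s ∈ Icc (0:ℝ) 1) :
    0 ≤ flux N lam h w s :=
  flux_zero (N := N) (lam := lam) (h := h) (w := w) ▸
    monotoneOn_flux hlam hh hh₀ hw hw₀ (left_mem_Icc.2 zero_le_one) hs hs.1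

theorem isSolutionComponent_of_eq_tcomp (hN : N ≠ 0) (hlam : 0 ≤ lam)
    (hh : ContinuousOn h (Ici 0)) (hh₀ : ∀ x, 0 ≤ x → 0 ≤ h x)
    (hw : ContinuousOn w (Icc 0 1)) (hw₀ : ∀ t ∈ Icc (0:ℝ) 1, 0 ≤ w t) {v : ℝ → ℝ}
    (hv : ∀ r ∈ Icc (0:ℝ) 1, Tcomp N lam h w r = v r) :
    IsSolutionComponent N lam h w (fun t => -v t) (fun s => flux N lam h w s ^ (N:ℝ)⁻¹) := by
  set φ : ℝ → ℝ := fun s => flux N lam h w s ^ (N:ℝ)⁻¹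
  have hF := fun r (hr : r ∈ Icc (0:ℝ) 1) =>
    hasDerivWithinAt_flux (N := N) (lam := lam) hh hw hw₀ hr
  have hF₀ := fun s (hs : s ∈ Icc (0:ℝ) 1) => flux_nonneg (N := N) hlam hh hh₀ hw hw₀ hs
  have hφ_cont : ContinuousOn φ (Icc 0 1) := fun s hs =>
    (hF s hs).continuousWithinAt.rpow_const (Or.inr (by positivity))
  have hφ_mono : MonotoneOn φ (Icc 0 1) := fun a ha b hb hab =>
    Real.rpow_le_rpow (hF₀ a ha) (monotoneOn_flux hlam hh hh₀ hw hw₀ ha hb hab) (by positivity)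
  have hφ_pow : ∀ s ∈ Icc (0:ℝ) 1, φ s ^ N = flux N lam h w s := fun s hs =>
    Real.rpow_inv_natCast_pow (hF₀ s hs) hN
  have hv_eq : ∀ t ∈ Icc (0:ℝ) 1, -v t = ∫ s in (1:ℝ)..t, φ s := fun t ht => by
    rw [← hv t ht, tcomp_eq_integral_flux, integral_symm, neg_neg]
  have hv_deriv : ∀ r ∈ Icc (0:ℝ) 1, HasDerivWithinAt (fun t => -v t) (φ r) (Icc 0 1) r :=
    fun r hr => (hasDerivWithinAt_integral_Icc hφ_cont (right_mem_Icc.2 zero_le_one) hr).congr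
      hv_eq (hv_eq r hr)
  refine ⟨hφ_mono.convexOn_Icc_of_hasDerivWithinAt hv_deriv, hφ_cont, hv_deriv, fun r hr => ?_,
    ?_, ?_⟩
  · have hr' := Ioo_subset_Icc_self hr
    exact (((hF r hr').congr hφ_pow (hφ_pow r hr')).mono Ioo_subset_Icc_self).congr_deriv
      (by ring)
  · simp [φ, flux_zero, hN]
  · simp [hv_eq 1 (right_mem_Icc.2 zero_le_one)]

end Flux

namespace IsSolutionComponent

variable {N : ℕ} {lam : ℝ} {h z u d : ℝ → ℝ}

theorem continuousOn (hs : IsSolutionComponent N lam h z u d) : ContinuousOn u (Icc 0 1) :=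
  fun r hr => (hs.hasDerivWithinAt r hr).continuousWithinAt

theorem deriv_nonneg (hs : IsSolutionComponent N lam h z u d)
    {r : ℝ} (hr : r ∈ Icc (0:ℝ) 1) : 0 ≤ d r :=
  hs.deriv_zero ▸ hs.convexOn.monotoneOn_of_hasDerivWithinAt hs.hasDerivWithinAt
    (left_mem_Icc.2 zero_le_one) hr hr.1

theorem monotoneOn (hs : IsSolutionComponent N lam h z u d) : MonotoneOn u (Icc 0 1) :=
  monotoneOn_Icc_of_hasDerivWithinAt_nonneg hs.hasDerivWithinAt fun _ hr => hs.deriv_nonneg hr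

theorem nonpos (hs : IsSolutionComponent N lam h z u d) {t : ℝ} (ht : t ∈ Icc (0:ℝ) 1) :
    u t ≤ 0 :=
  hs.eq_zero_one ▸ hs.monotoneOn ht (right_mem_Icc.2 zero_le_one) ht.2

theorem quarter_supNorm_le (hs : IsSolutionComponent N lam h z u d)
    {t : ℝ} (ht : t ∈ Icc (1/4:ℝ) (3/4)) :
    1/4 * supNorm (fun t => -u t) ≤ -u t :=
  quarter_supNorm_le_of_concaveOn hs.convexOn.neg hs.monotoneOn.neg
    (fun _ ht => neg_nonneg.2 (hs.nonpos ht)) ht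

theorem flux_eq_pow (hs : IsSolutionComponent N lam h z u d)
    (hN : N ≠ 0) (hh : ContinuousOn h (Ici 0))
    (hz : ContinuousOn z (Icc 0 1)) (hz₀ : ∀ t ∈ Icc (0:ℝ) 1, 0 ≤ z t)
    {s : ℝ} (hs' : s ∈ Icc (0:ℝ) 1) : flux N lam h z s = d s ^ N := by
  have hsub : Icc 0 s ⊆ Icc (0:ℝ) 1 := Icc_subset_Icc_right hs'.2
  have hd_pow : ∀ r ∈ Ioo 0 s,
      HasDerivAt (fun s => d s ^ N) (lam * ((N:ℝ) * r ^ (N - 1) * h (z r))) r := fun r hr => by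
    have hr' : r ∈ Ioo (0:ℝ) 1 := ⟨hr.1, hr.2.trans_le hs'.2⟩
    rw [← mul_assoc, ← mul_assoc]
    exact (hs.hasDerivWithinAt_pow r hr').hasDerivAt (Ioo_mem_nhds hr'.1 hr'.2)
  have hint : IntervalIntegrable (fun r => lam * ((N:ℝ) * r ^ (N - 1) * h (z r)))
      MeasureTheory.volume 0 s :=
    ((continuousOn_flux_integrand hh hz hz₀).mono
      ((uIcc_of_le hs'.1).subset.trans hsub)).intervalIntegrable.const_mul lam
  rw [flux, ← integral_const_mul, integral_eq_sub_of_hasDerivAt_of_le hs'.1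
    ((hs.continuousOn_deriv.mono hsub).pow N) hd_pow hint]
  simp [hs.deriv_zero, hN]

theorem tcomp_eq (hs : IsSolutionComponent N lam h z u d)
    (hN : N ≠ 0) (hh : ContinuousOn h (Ici 0))
    (hz : ContinuousOn z (Icc 0 1)) (hz₀ : ∀ t ∈ Icc (0:ℝ) 1, 0 ≤ z t)
    {r : ℝ} (hr : r ∈ Icc (0:ℝ) 1) : Tcomp N lam h z r = -u r := by
  have hsub : Icc r 1 ⊆ Icc (0:ℝ) 1 := Icc_subset_Icc_left hr.1
  have hd : ∀ s ∈ uIcc r 1, flux N lam h z s ^ (N:ℝ)⁻¹ = d s := fun s hs' => by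
    have hs₀ := hsub ((uIcc_of_le hr.2).subset hs')
    rw [hs.flux_eq_pow hN hh hz hz₀ hs₀, Real.pow_rpow_inv_natCast (hs.deriv_nonneg hs₀) hN]
  rw [tcomp_eq_integral_flux, integral_congr hd, integral_eq_sub_of_hasDerivWithinAt_Icc hr.2
    (fun s hs' => (hs.hasDerivWithinAt s (hsub hs')).mono hsub)
    (hs.continuousOn_deriv.mono hsub), hs.eq_zero_one, zero_sub]

end IsSolutionComponent

/-- Equivalence between nonzero fixed points of `T_λ` in the cone `K` and nontrivial
convex solutions of (⋆): if `(v₁,v₂) ∈ K` is a nonzero fixed point of `T_λ`, then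
`(-v₁,-v₂)` is a nontrivial convex solution of (⋆); conversely, if `(u₁,u₂)` is a
nontrivial convex solution of (⋆), then `(-u₁,-u₂) ∈ K` and is a fixed point of `T_λ`. -/
theorem fixed_point_iff_solution
    (N : ℕ) (hN : 1 ≤ N) (f g : ℝ → ℝ)
    (hfc : ContinuousOn f (Ici 0)) (hgc : ContinuousOn g (Ici 0))
    (hfnn : ∀ x, 0 ≤ x → 0 ≤ f x) (hgnn : ∀ x, 0 ≤ x → 0 ≤ g x)
    (lam : ℝ) (hlam : 0 < lam) :
    (∀ v₁ v₂ : ℝ → ℝ, InCone v₁ v₂ →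
      (∀ r ∈ Icc (0:ℝ) 1, Tcomp N lam f v₂ r = v₁ r) →
      (∀ r ∈ Icc (0:ℝ) 1, Tcomp N lam g v₁ r = v₂ r) →
      (¬ ∀ t ∈ Icc (0:ℝ) 1, v₁ t = 0 ∧ v₂ t = 0) →
      IsNontrivialConvexSolution N f g lam (fun t => -v₁ t) (fun t => -v₂ t)) ∧
    (∀ u₁ u₂ : ℝ → ℝ, IsNontrivialConvexSolution N f g lam u₁ u₂ →
      InCone (fun t => -u₁ t) (fun t => -u₂ t) ∧
      (∀ r ∈ Icc (0:ℝ) 1, Tcomp N lam f (fun t => -u₂ t) r = -u₁ r) ∧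
      (∀ r ∈ Icc (0:ℝ) 1, Tcomp N lam g (fun t => -u₁ t) r = -u₂ r)) := by
  have hN₀ : N ≠ 0 := Nat.one_le_iff_ne_zero.mp hN
  refine ⟨fun v₁ v₂ hK hfix₁ hfix₂ hnz => ?_, fun u₁ u₂ hsol => ?_⟩
  · obtain ⟨hv₁, hv₂, hv₁₀, hv₂₀, -, -⟩ := hK
    rw [isNontrivialConvexSolution_iff]
    simp only [neg_neg, neg_eq_zero]
    exact ⟨_, _, isSolutionComponent_of_eq_tcomp hN₀ hlam.le hfc hfnn hv₂ hv₂₀ hfix₁,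
      isSolutionComponent_of_eq_tcomp hN₀ hlam.le hgc hgnn hv₁ hv₁₀ hfix₂, hnz⟩
  · obtain ⟨d₁, d₂, hs₁, hs₂, -⟩ := isNontrivialConvexSolution_iff.1 hsol
    have hu₁₀ : ∀ t ∈ Icc (0:ℝ) 1, 0 ≤ -u₁ t := fun _ ht => neg_nonneg.2 (hs₁.nonpos ht)
    have hu₂₀ : ∀ t ∈ Icc (0:ℝ) 1, 0 ≤ -u₂ t := fun _ ht => neg_nonneg.2 (hs₂.nonpos ht)
    exact ⟨⟨hs₁.continuousOn.neg, hs₂.continuousOn.neg, hu₁₀, hu₂₀,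
        fun _ => hs₁.quarter_supNorm_le, fun _ => hs₂.quarter_supNorm_le⟩,
      fun _ => hs₁.tcomp_eq hN₀ hfc hs₂.continuousOn.neg hu₂₀,
      fun _ => hs₂.tcomp_eq hN₀ hgc hs₁.continuousOn.neg hu₁₀⟩
end
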